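/- arXiv:1602.07862 — 6 statements merged into one kernel-verified Lean document; each statement's English description precedes it below -/
import Mathlib

section
/- Let f : ℂ^n → ℂ and Θ : ℂ^n → ℂ^n be analytic, let φ : ℂ × ℂ^n → ℂ^n be a global complex-time flow of Θ, and let g : ℂ^n × ℂ → ℂ be analytic with f(φ(t,x)) = f(x) + t·g(x,t) for all t, x. Define Φ : ℂ × (ℂ × ℂ × ℂ^n) → ℂ × ℂ × ℂ^n by Φ(t,(u,v,x)) = (u + t·g(x,tv), v, φ(tv,x)). Then: (i) Φ(0,p) = p for all p; (ii) ∂Φ/∂t(t,(u,v,x)) = Θ_u(Φ(t,(u,v,x))) for all t ∈ ℂ and (u,v,x) ∈ ℂ^{2+n}, where Θ_u is the lifted vector field of Θ; and (iii) if uv = f(x) then the point Φ(t,(u,v,x)) again satisfies the equation, i.e. (u + t·g(x,tv))·v = f(φ(tv,x)). Hence Θ_u is a complete vector field on the suspension {uv = f(x)}. -/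
/-!
Since `τ * g (x, τ) = f (φ τ x) - f x`, differentiating at `τ = t * v` gives
`g (x, t v) + t v ∂g (x, t v) = Df (Θ)` along the flow, and the left side is exactly the
`t`-derivative of `t * g (x, t v)`. This identity holds uniformly in `v`, including `v = 0`.
-/

section

variable {𝕜 : Type*} [NontriviallyNormedField 𝕜]
  {E : Type*} [NormedAddCommGroup E] [NormedSpace 𝕜 E]

theorem hasDerivAt_smul_comp_mul_const {G : 𝕜 → E} {D : E} {t v : 𝕜}
    (hG : DifferentiableAt 𝕜 G (t * v)) (hF : HasDerivAt (fun τ => τ • G τ) D (t * v)) :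
    HasDerivAt (fun s => s • G (s * v)) D t := by
  have hD : D = (t * v) • deriv G (t * v) + G (t * v) := by
    simpa using hF.unique ((hasDerivAt_id _).smul hG.hasDerivAt)
  rw [hD, mul_smul]
  exact ((hasDerivAt_id' t).smul (hG.hasDerivAt.scomp t (hasDerivAt_mul_const v))).congr_deriv
    (by simp)

theorem HasDerivAt.comp_mul_const {γ : 𝕜 → E} {γ' : E} {t v : 𝕜}
    (hγ : HasDerivAt γ γ' (t * v)) : HasDerivAt (fun s => γ (s * v)) (v • γ') t :=
  hγ.scomp t (hasDerivAt_mul_const v)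

theorem hasDerivAt_mul_comp_mul_const_of_flow {f : E → 𝕜} {Θ : E → E} {φ : 𝕜 → E → E}
    {g : E × 𝕜 → 𝕜} {x : E} {t v : 𝕜} (hf : DifferentiableAt 𝕜 f (φ (t * v) x))
    (hφ : HasDerivAt (fun s => φ s x) (Θ (φ (t * v) x)) (t * v))
    (hg : DifferentiableAt 𝕜 (fun τ => g (x, τ)) (t * v))
    (hfg : ∀ τ, f (φ τ x) = f x + τ * g (x, τ)) :
    HasDerivAt (fun s => s * g (x, s * v)) (fderiv 𝕜 f (φ (t * v) x) (Θ (φ (t * v) x))) t := by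
  have hF : HasDerivAt (fun τ => τ * g (x, τ)) (fderiv 𝕜 f (φ (t * v) x) (Θ (φ (t * v) x)))
      (t * v) := by
    have hchain := (hf.hasFDerivAt.comp_hasDerivAt (t * v) hφ).sub_const (f x)
    refine hchain.congr_of_eventuallyEq (Filter.Eventually.of_forall fun τ => ?_)
    simp [hfg]
  exact hasDerivAt_smul_comp_mul_const (G := fun τ => g (x, τ)) hg hF

end

theorem stmt_3_general (n : ℕ) (f : (Fin n → ℂ) → ℂ) (Θ : (Fin n → ℂ) → (Fin n → ℂ))
    (hf : Differentiable ℂ f)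
    (φ : ℂ → (Fin n → ℂ) → (Fin n → ℂ))
    (hφ0 : ∀ x, φ 0 x = x)
    (hφ : ∀ (t : ℂ) (x : Fin n → ℂ), HasDerivAt (fun s => φ s x) (Θ (φ t x)) t)
    (g : (Fin n → ℂ) × ℂ → ℂ) (hg : Differentiable ℂ g)
    (hfg : ∀ (t : ℂ) (x : Fin n → ℂ), f (φ t x) = f x + t * g (x, t))
    (Θu : ℂ × ℂ × (Fin n → ℂ) → ℂ × ℂ × (Fin n → ℂ))
    (hΘu : ∀ (u v : ℂ) (x : Fin n → ℂ), Θu (u, v, x) = (fderiv ℂ f x (Θ x), 0, v • Θ x))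
    (Φ : ℂ → ℂ × ℂ × (Fin n → ℂ) → ℂ × ℂ × (Fin n → ℂ))
    (hΦ : ∀ (t u v : ℂ) (x : Fin n → ℂ),
      Φ t (u, v, x) = (u + t * g (x, t * v), v, φ (t * v) x)) :
    (∀ p, Φ 0 p = p) ∧
    (∀ (t : ℂ) (p : ℂ × ℂ × (Fin n → ℂ)), HasDerivAt (fun s => Φ s p) (Θu (Φ t p)) t) ∧
    (∀ (t u v : ℂ) (x : Fin n → ℂ), u * v = f x →
      (u + t * g (x, t * v)) * v = f (φ (t * v) x)) := by
  refine ⟨fun ⟨u, v, x⟩ => by simp [hΦ, hφ0], fun t ⟨u, v, x⟩ => ?_,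
    fun t u v x h => by rw [hfg, ← h]; ring⟩
  have hgx : DifferentiableAt ℂ (fun τ => g (x, τ)) (t * v) :=
    (hg _).comp _ ((differentiableAt_const x).prodMk differentiableAt_id)
  have hu := hasDerivAt_mul_comp_mul_const_of_flow (hf _) (hφ _ x) hgx (hfg · x)
  have hx := (hφ (t * v) x).comp_mul_const (v := v)
  simp only [hΦ, hΘu]
  exact (hu.const_add u).prodMk ((hasDerivAt_const t v).prodMk hx)

/-- Let `φ` be a global complex-time flow of the holomorphic vector field `Θ`
on `ℂ^n`, `f : ℂ^n → ℂ` holomorphic, and `g` holomorphic with `f (φ t x) = f x + t * g (x,t)`.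
Then `Φ t (u,v,x) = (u + t * g (x, t*v), v, φ (t*v) x)` satisfies: (i) `Φ 0 = id`;
(ii) `∂Φ/∂t (t,p) = Θ_u (Φ t p)` where `Θ_u (u,v,x) = (Df_x(Θ x), 0, v • Θ x)` is the lifted
field; (iii) `Φ t` preserves the suspension `{uv = f x}`. Hence `Θ_u` is complete on the
suspension. -/
theorem stmt_3 (n : ℕ) (f : (Fin n → ℂ) → ℂ) (Θ : (Fin n → ℂ) → (Fin n → ℂ))
    (hf : Differentiable ℂ f) (hΘ : Differentiable ℂ Θ)
    (φ : ℂ → (Fin n → ℂ) → (Fin n → ℂ))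
    (hφ0 : ∀ x, φ 0 x = x)
    (hφ : ∀ (t : ℂ) (x : Fin n → ℂ), HasDerivAt (fun s => φ s x) (Θ (φ t x)) t)
    (g : (Fin n → ℂ) × ℂ → ℂ) (hg : Differentiable ℂ g)
    (hfg : ∀ (t : ℂ) (x : Fin n → ℂ), f (φ t x) = f x + t * g (x, t))
    (Θu : ℂ × ℂ × (Fin n → ℂ) → ℂ × ℂ × (Fin n → ℂ))
    (hΘu : ∀ (u v : ℂ) (x : Fin n → ℂ), Θu (u, v, x) = (fderiv ℂ f x (Θ x), 0, v • Θ x))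
    (Φ : ℂ → ℂ × ℂ × (Fin n → ℂ) → ℂ × ℂ × (Fin n → ℂ))
    (hΦ : ∀ (t u v : ℂ) (x : Fin n → ℂ),
      Φ t (u, v, x) = (u + t * g (x, t * v), v, φ (t * v) x)) :
    (∀ p, Φ 0 p = p) ∧
    (∀ (t : ℂ) (p : ℂ × ℂ × (Fin n → ℂ)), HasDerivAt (fun s => Φ s p) (Θu (Φ t p)) t) ∧
    (∀ (t u v : ℂ) (x : Fin n → ℂ), u * v = f x →
      (u + t * g (x, t * v)) * v = f (φ (t * v) x)) :=
  stmt_3_general n f Θ hf φ hφ0 hφ g hg hfg Θu hΘu Φ hΦ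
end

section
/- Let f : ℂ^n → ℂ and Θ : ℂ^n → ℂ^n be analytic. Then the divergence of the lifted vector field Θ_u satisfies, at every point (u,v,x) ∈ ℂ^{2+n}: tr(D(Θ_u)_{(u,v,x)}) = v · tr(DΘ_x). In particular, if Θ is divergence-free on ℂ^n, then Θ_u is divergence-free on ℂ^{2+n}. -/
/-!
The first two components of `Θ_u` do not depend on `(u, v)` and the last one is linear in `v`, so
`D(Θ_u)` is block triangular with diagonal blocks `0`, `0` and `v • DΘ_x`; its trace is
`v * tr DΘ_x`. The only analytic input is that `x ↦ Df_x (Θ x)` is complex differentiable. This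
holds because a complex differentiable function on a finite-dimensional space is smooth: by the
Cauchy formula on complex lines, each directional derivative `x ↦ Df_x w` is an integral over the
circle of translates of `f`, which may be differentiated under the integral sign.
-/

open Metric Complex Real
open scoped ContDiff

section Holomorphic

variable {E F : Type*} [NormedAddCommGroup E] [NormedSpace ℂ E]
  [NormedAddCommGroup F] [NormedSpace ℂ F] {f : E → F}

theorem Differentiable.hasDerivAt_comp_add_smul (hf : Differentiable ℂ f) (x w : E) :
    HasDerivAt (fun z : ℂ => f (x + z • w)) (fderiv ℂ f x w) 0 := by
  have hline : HasDerivAt (fun z : ℂ => x + z • w) w 0 := by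
    simpa using ((hasDerivAt_id (0 : ℂ)).smul_const w).const_add x
  simpa [Function.comp_def] using (hf (x + (0 : ℂ) • w)).hasFDerivAt.comp_hasDerivAt 0 hline

theorem Differentiable.fderiv_apply_eq_intervalIntegral [CompleteSpace F]
    (hf : Differentiable ℂ f) (x w : E) :
    fderiv ℂ f x w = (2 * π : ℂ)⁻¹ •
      ∫ θ in (0 : ℝ)..2 * π, (circleMap 0 1 θ)⁻¹ • f (x + circleMap 0 1 θ • w) := by
  have hline : Differentiable ℂ fun z : ℂ => f (x + z • w) :=
    hf.comp ((differentiable_id.smul_const w).const_add x)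
  have hcauchy := hline.diffContOnCl.deriv_eq_smul_circleIntegral (c := 0) zero_lt_one
  simp_rw [(hf.hasDerivAt_comp_add_smul x w).deriv, circleIntegral, deriv_circleMap,
    sub_zero] at hcauchy
  -- `dz = i z dθ` turns the Cauchy kernel `z⁻² dz` into `i z⁻¹ dθ`
  have hkernel : ∀ θ : ℝ, (circleMap 0 1 θ * I) • (1 / circleMap 0 1 θ ^ 2) •
      f (x + circleMap 0 1 θ • w) = I • (circleMap 0 1 θ)⁻¹ • f (x + circleMap 0 1 θ • w) := by
    intro θ
    have h0 : circleMap 0 1 θ ≠ 0 := circleMap_ne_center one_ne_zero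
    rw [smul_smul, smul_smul]
    congr 1
    field_simp
  simp_rw [hkernel, intervalIntegral.integral_smul] at hcauchy
  rw [eq_inv_smul_iff₀ (by simp [pi_ne_zero]), ← (smul_right_injective F I_ne_zero).eq_iff,
    hcauchy, smul_smul, mul_comm]

theorem Differentiable.continuous_fderiv [CompleteSpace F] [FiniteDimensional ℂ E]
    (hf : Differentiable ℂ f) : Continuous (fderiv ℂ f) := by
  refine continuous_clm_apply.2 fun w => ?_
  simp_rw [hf.fderiv_apply_eq_intervalIntegral]
  refine
    (intervalIntegral.continuous_parametric_intervalIntegral_of_continuous' ?_ _ _).const_smul _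
  have hc := continuous_circleMap 0 1
  exact (hc.snd'.inv₀ fun _ => circleMap_ne_center one_ne_zero).smul
    (hf.continuous.comp (continuous_fst.add (hc.snd'.smul continuous_const)))

theorem Differentiable.hasFDerivAt_intervalIntegral_smul_comp_add [CompleteSpace F]
    [FiniteDimensional ℂ E] (hf : Differentiable ℂ f) {k : ℝ → ℂ} {g : ℝ → E}
    (hk : Continuous k) (hg : Continuous g) (a b : ℝ) (x₀ : E) :
    HasFDerivAt (fun x => ∫ θ in a..b, k θ • f (x + g θ))
      (∫ θ in a..b, k θ • fderiv ℂ f (x₀ + g θ)) x₀ := by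
  have : ProperSpace E := FiniteDimensional.proper ℂ E
  obtain ⟨Ck, hCk⟩ := (isCompact_uIcc (a := a) (b := b)).exists_bound_of_continuousOn
    hk.continuousOn
  obtain ⟨Cg, hCg⟩ := (isCompact_uIcc (a := a) (b := b)).exists_bound_of_continuousOn
    hg.continuousOn
  obtain ⟨Cd, hCd⟩ := (isCompact_closedBall x₀ (1 + Cg)).exists_bound_of_continuousOn
    hf.continuous_fderiv.continuousOn
  have hmem : ∀ θ ∈ Set.uIcc a b, ∀ x ∈ ball x₀ 1, x + g θ ∈ closedBall x₀ (1 + Cg) := by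
    intro θ hθ x hx
    rw [mem_closedBall, dist_eq_norm, add_sub_right_comm]
    exact (norm_add_le _ _).trans (add_le_add (mem_ball_iff_norm.1 hx).le (hCg θ hθ))
  refine intervalIntegral.hasFDerivAt_integral_of_dominated_of_fderiv_le
    (F' := fun x θ => k θ • fderiv ℂ f (x + g θ)) (μ := MeasureTheory.volume)
    (bound := fun _ => Ck * Cd)
    (ball_mem_nhds x₀ one_pos) ?_ ?_ ?_ ?_ intervalIntegrable_const ?_
  · exact Filter.Eventually.of_forall fun x =>
      (hk.smul (hf.continuous.comp (continuous_const.add hg))).aestronglyMeasurable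
  · exact (hk.smul (hf.continuous.comp (continuous_const.add hg))).intervalIntegrable _ _
  · exact (hk.smul (hf.continuous_fderiv.comp (continuous_const.add hg))).aestronglyMeasurable
  · refine Filter.Eventually.of_forall fun θ hθ x hx => ?_
    have hθ' := Set.uIoc_subset_uIcc hθ
    rw [norm_smul]
    exact mul_le_mul (hCk θ hθ') (hCd _ (hmem θ hθ' x hx)) (norm_nonneg _)
      ((norm_nonneg _).trans (hCk θ hθ'))
  · exact Filter.Eventually.of_forall fun θ _ x _ =>
      ((hf _).hasFDerivAt.comp x ((hasFDerivAt_id x).add_const (g θ))).const_smul (k θ)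

theorem Differentiable.differentiable_fderiv_apply [CompleteSpace F] [FiniteDimensional ℂ E]
    (hf : Differentiable ℂ f) (w : E) : Differentiable ℂ fun x => fderiv ℂ f x w := by
  simp_rw [hf.fderiv_apply_eq_intervalIntegral]
  have hc := continuous_circleMap 0 1
  exact fun x => ((hf.hasFDerivAt_intervalIntegral_smul_comp_add
    (hc.inv₀ fun _ => circleMap_ne_center one_ne_zero) (hc.smul continuous_const) 0 (2 * π)
    x).differentiableAt).const_smul _

theorem Differentiable.contDiff_of_finiteDimensional [CompleteSpace F] [FiniteDimensional ℂ E]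
    (hf : Differentiable ℂ f) : ContDiff ℂ ∞ f := by
  refine contDiff_infty.2 fun n => ?_
  induction n generalizing F with
  | zero => exact contDiff_zero.2 hf.continuous
  | succ n ih =>
    rw [Nat.cast_succ]
    refine contDiff_succ_iff_fderiv_apply.2 ⟨hf, fun h => ?_, fun w => ?_⟩
    · simp at h
    exact ih (hf.differentiable_fderiv_apply w)

end Holomorphic

namespace LinearMap

variable {R M N : Type*} [CommRing R] [AddCommGroup M] [Module R M] [AddCommGroup N] [Module R N]
  [Module.Free R M] [Module.Finite R M] [Module.Free R N] [Module.Finite R N]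

theorem trace_prod_eq_add (L : Module.End R (M × N)) :
    trace R (M × N) L =
      trace R M (fst R M N ∘ₗ L ∘ₗ inl R M N) + trace R N (snd R M N ∘ₗ L ∘ₗ inr R M N) := by
  have hL : L = inl R M N ∘ₗ (fst R M N ∘ₗ L) + inr R M N ∘ₗ (snd R M N ∘ₗ L) := by
    ext <;> simp
  conv_lhs => rw [hL]
  rw [map_add, trace_comp_comm', trace_comp_comm' _ (inr R M N), comp_assoc, comp_assoc]

end LinearMap

section LiftedField

variable {𝕜 E : Type*} [NontriviallyNormedField 𝕜] [NormedAddCommGroup E] [NormedSpace 𝕜 E]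
  [FiniteDimensional 𝕜 E]

theorem trace_fderiv_lift_eq_mul {φ : E → 𝕜} {Θ : E → E} {x : E} (hφ : DifferentiableAt 𝕜 φ x)
    (hΘ : DifferentiableAt 𝕜 Θ x) (u v : 𝕜) :
    LinearMap.trace 𝕜 (𝕜 × 𝕜 × E)
      (fderiv 𝕜 (fun p : 𝕜 × 𝕜 × E => (φ p.2.2, (0 : 𝕜), p.2.1 • Θ p.2.2)) (u, v, x)).toLinearMap
      = v * LinearMap.trace 𝕜 E (fderiv 𝕜 Θ x).toLinearMap := by
  have hπ : HasFDerivAt (fun p : 𝕜 × 𝕜 × E => p.2.2) _ (u, v, x) :=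
    (hasFDerivAt_snd (𝕜 := 𝕜)).snd
  have hσ : HasFDerivAt (fun p : 𝕜 × 𝕜 × E => p.2.1) _ (u, v, x) :=
    (hasFDerivAt_snd (𝕜 := 𝕜)).fst
  have hL : HasFDerivAt (fun p : 𝕜 × 𝕜 × E => (φ p.2.2, (0 : 𝕜), p.2.1 • Θ p.2.2)) _ (u, v, x) :=
    (hφ.hasFDerivAt.comp _ hπ).prodMk
      ((hasFDerivAt_const (0 : 𝕜) _).prodMk (hσ.smul (hΘ.hasFDerivAt.comp _ hπ)))
  -- differentiating `v • Θ x` in `v` gives a term with no diagonal entry in the `E`-block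
  have hrank : (LinearMap.fst 𝕜 𝕜 E ∘ₗ LinearMap.snd 𝕜 𝕜 (𝕜 × E)).smulRight (Θ x) ∘ₗ
      LinearMap.inr 𝕜 𝕜 (𝕜 × E) ∘ₗ LinearMap.inr 𝕜 𝕜 E = 0 := by
    ext; simp
  rw [hL.fderiv, LinearMap.trace_prod_eq_add, LinearMap.trace_prod_eq_add]
  simp [LinearMap.prod_comp, LinearMap.add_comp, LinearMap.smul_comp,
    LinearMap.comp_assoc, hrank]

end LiftedField

/-- the divergence (trace of the Fréchet derivative) of the lifted field
`Θ_u (u,v,x) = (Df_x(Θ x), 0, v • Θ x)` satisfies `div Θ_u (u,v,x) = v * div Θ x`.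
In particular, if `Θ` is divergence-free then so is `Θ_u`. -/
theorem stmt_5 (n : ℕ) (f : (Fin n → ℂ) → ℂ) (Θ : (Fin n → ℂ) → (Fin n → ℂ))
    (hf : Differentiable ℂ f) (hΘ : Differentiable ℂ Θ)
    (Θu : ℂ × ℂ × (Fin n → ℂ) → ℂ × ℂ × (Fin n → ℂ))
    (hΘu : ∀ (u v : ℂ) (x : Fin n → ℂ), Θu (u, v, x) = (fderiv ℂ f x (Θ x), 0, v • Θ x)) :
    (∀ (u v : ℂ) (x : Fin n → ℂ),
      LinearMap.trace ℂ (ℂ × ℂ × (Fin n → ℂ)) (fderiv ℂ Θu (u, v, x)).toLinearMap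
        = v * LinearMap.trace ℂ (Fin n → ℂ) (fderiv ℂ Θ x).toLinearMap) ∧
    ((∀ x, LinearMap.trace ℂ (Fin n → ℂ) (fderiv ℂ Θ x).toLinearMap = 0) →
      ∀ p : ℂ × ℂ × (Fin n → ℂ),
        LinearMap.trace ℂ (ℂ × ℂ × (Fin n → ℂ)) (fderiv ℂ Θu p).toLinearMap = 0) := by
  obtain rfl : Θu = fun p => (fderiv ℂ f p.2.2 (Θ p.2.2), 0, p.2.1 • Θ p.2.2) :=
    funext fun p => hΘu p.1 p.2.1 p.2.2
  have hφ : Differentiable ℂ fun y => fderiv ℂ f y (Θ y) :=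
    ((hf.contDiff_of_finiteDimensional.fderiv_right (m := 1) (by norm_cast)).differentiable
      one_ne_zero).clm_apply hΘ
  have hdiv (u v : ℂ) (x : Fin n → ℂ) := trace_fderiv_lift_eq_mul (hφ x) (hΘ x) u v
  refine ⟨hdiv, fun hΘ_div p => ?_⟩
  rw [hdiv p.1 p.2.1 p.2.2, hΘ_div, mul_zero]
end

section
/- Let R be a commutative ring, A a commutative R-algebra, and let ν, μ be R-linear derivations of A (elements of Derivation R A A, which form a Lie ring under the commutator bracket and an A-module under pointwise multiplication). Let f, g, h ∈ A satisfy μ(h) = 0. Then ⁅f • ν, (g·h) • μ⁆ − ⁅(f·h) • ν, g • μ⁆ = (f · g · ν(h)) • μ. -/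
/-- for derivations `ν, μ` of a commutative `R`-algebra `A` and `f, g, h ∈ A`
with `μ h = 0`, one has `⁅f • ν, (g*h) • μ⁆ - ⁅(f*h) • ν, g • μ⁆ = (f*g*ν h) • μ`. -/
theorem stmt_6 (R A : Type*) [CommRing R] [CommRing A] [Algebra R A]
    (ν μ : Derivation R A A) (f g h : A) (hμh : μ h = 0) :
    ⁅f • ν, (g * h) • μ⁆ - ⁅(f * h) • ν, g • μ⁆ = (f * g * ν h) • μ := by
  ext a
  simp [Derivation.commutator_apply, hμh, mul_comm, mul_assoc, mul_left_comm]
  ring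
end

section
/- Let Θ : ℂ^n → ℂ^n be a vector field with global complex-time flow ψ : ℂ × ℂ^n → ℂ^n, and let g : ℂ^n → ℂ be a function invariant under the flow, i.e. g(ψ(s,x)) = g(x) for all s ∈ ℂ, x ∈ ℂ^n. Then Φ : ℂ × ℂ^n → ℂ^n defined by Φ(t,x) = ψ(t·g(x), x) is a global complex-time flow of the vector field g·Θ : x ↦ g(x)·Θ(x). In particular, if Θ is complete and g lies in the kernel of Θ, then g·Θ is complete. -/
/-- if `ψ` is a global complex-time flow of `Θ` and `g` is invariant under the
flow, then `Φ t x = ψ (t * g x) x` is a global complex-time flow of the field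
`x ↦ g x • Θ x`. In particular, if `Θ` is complete and `g ∈ Ker Θ`, then `g·Θ` is complete. -/
theorem stmt_8 (n : ℕ) (Θ : (Fin n → ℂ) → (Fin n → ℂ))
    (ψ : ℂ → (Fin n → ℂ) → (Fin n → ℂ))
    (hψ0 : ∀ x, ψ 0 x = x)
    (hψ : ∀ (s : ℂ) (x : Fin n → ℂ), HasDerivAt (fun r => ψ r x) (Θ (ψ s x)) s)
    (g : (Fin n → ℂ) → ℂ)
    (hinv : ∀ (s : ℂ) (x : Fin n → ℂ), g (ψ s x) = g x)
    (Φ : ℂ → (Fin n → ℂ) → (Fin n → ℂ))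
    (hΦ : ∀ (t : ℂ) (x : Fin n → ℂ), Φ t x = ψ (t * g x) x) :
    (∀ x, Φ 0 x = x) ∧
    (∀ (t : ℂ) (x : Fin n → ℂ),
      HasDerivAt (fun s => Φ s x) ((fun y => g y • Θ y) (Φ t x)) t) := by
  constructor
  · intro x
    simp [hΦ, hψ0]
  · intro t x
    have h1 : HasDerivAt (fun s : ℂ => s * g x) (g x) t :=
      by simpa using (hasDerivAt_id t).mul_const (g x)
    have h2 := (hψ (t * g x) x).scomp t h1
    have key : HasDerivAt (fun s => Φ s x) (g x • Θ (ψ (t * g x) x)) t := by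
      have : (fun s => Φ s x) = fun s => ψ (s * g x) x := by
        funext s; exact hΦ s x
      rw [this]; exact h2
    simpa [hΦ, hinv] using key
end

section
/- Let Θ : ℂ^n → ℂ^n be a vector field with global complex-time flow ψ : ℂ × ℂ^n → ℂ^n, and let f, c : ℂ^n → ℂ satisfy f(ψ(s,x)) = f(x) + s·c(x) for all s ∈ ℂ, x ∈ ℂ^n. Let E : ℂ → ℂ be the entire function with w·E(w) = e^w − 1 and E(0) = 1. Then Φ : ℂ × ℂ^n → ℂ^n defined by Φ(t,x) = ψ(t·f(x)·E(t·c(x)), x) is a global complex-time flow of the vector field f·Θ : x ↦ f(x)·Θ(x). In particular, if Θ is complete and Θ(f) lies in the kernel of Θ, then f·Θ is complete. -/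
/-!
`Φ` is `ψ` run along the time change `τₓ(t) = t f(x) E(t c(x))`, i.e. `f(x) (e^{t c(x)} - 1) / c(x)`
when `c(x) ≠ 0`. Its derivative is `f(x) e^{t c(x)}`, and the hypothesis on `f` gives
`f(Φ(t,x)) = f(x) + τₓ(t) c(x) = f(x) e^{t c(x)}` as well, so the chain rule turns
`∂ₜψ = Θ ∘ ψ` into `∂ₜΦ = (f • Θ) ∘ Φ`.
-/

section ExpRel

variable {E : ℂ → ℂ} (hEw : ∀ w : ℂ, w * E w = Complex.exp w - 1)
include hEw

theorem one_add_mul_eq_exp_of_mul_eq_exp_sub_one (w : ℂ) : 1 + w * E w = Complex.exp w := by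
  rw [hEw]; ring

theorem hasDerivAt_mul_comp_mul_of_mul_eq_exp_sub_one (hE0 : E 0 = 1) (γ t : ℂ) :
    HasDerivAt (fun s => s * E (s * γ)) (Complex.exp (t * γ)) t := by
  rcases eq_or_ne γ 0 with rfl | hγ
  · simpa [hE0] using hasDerivAt_id' t
  · have hquot : (fun s => s * E (s * γ)) = fun s => (Complex.exp (s * γ) - 1) / γ := by
      funext s
      rw [eq_div_iff hγ, ← hEw]
      ring
    rw [hquot]
    exact (((hasDerivAt_mul_const γ).cexp).sub_const 1).div_const γ
      |>.congr_deriv (mul_div_cancel_right₀ _ hγ)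

end ExpRel

theorem stmt_9_general (n : ℕ) (Θ : (Fin n → ℂ) → (Fin n → ℂ))
    (ψ : ℂ → (Fin n → ℂ) → (Fin n → ℂ))
    (hψ0 : ∀ x, ψ 0 x = x)
    (hψ : ∀ (s : ℂ) (x : Fin n → ℂ), HasDerivAt (fun r => ψ r x) (Θ (ψ s x)) s)
    (f c : (Fin n → ℂ) → ℂ)
    (hfc : ∀ (s : ℂ) (x : Fin n → ℂ), f (ψ s x) = f x + s * c x)
    (E : ℂ → ℂ)
    (hEw : ∀ w : ℂ, w * E w = Complex.exp w - 1) (hE0 : E 0 = 1)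
    (Φ : ℂ → (Fin n → ℂ) → (Fin n → ℂ))
    (hΦ : ∀ (t : ℂ) (x : Fin n → ℂ), Φ t x = ψ (t * f x * E (t * c x)) x) :
    (∀ x, Φ 0 x = x) ∧
    (∀ (t : ℂ) (x : Fin n → ℂ),
      HasDerivAt (fun s => Φ s x) ((fun y => f y • Θ y) (Φ t x)) t) := by
  refine ⟨fun x => by simp [hΦ, hψ0], fun t x => ?_⟩
  have hτ : HasDerivAt (fun s => s * f x * E (s * c x)) (f x * Complex.exp (t * c x)) t := by
    rw [show (fun s => s * f x * E (s * c x)) = fun s => f x * (s * E (s * c x)) by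
      funext s; ring]
    exact (hasDerivAt_mul_comp_mul_of_mul_eq_exp_sub_one hEw hE0 (c x) t).const_mul (f x)
  have hfΦ : f (Φ t x) = f x * Complex.exp (t * c x) := by
    rw [hΦ, hfc, ← one_add_mul_eq_exp_of_mul_eq_exp_sub_one hEw]
    ring
  have hΦx : (fun s => Φ s x) = (fun r => ψ r x) ∘ fun s => s * f x * E (s * c x) :=
    funext fun s => hΦ s x
  show HasDerivAt _ (f (Φ t x) • Θ (Φ t x)) t
  rw [hΦx, hfΦ, hΦ]
  exact (hψ _ x).scomp t hτ

/-- if `ψ` is a global complex-time flow of `Θ`, `f (ψ s x) = f x + s * c x`,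
and `E` is the entire function with `w * E w = e^w - 1` and `E 0 = 1`, then
`Φ t x = ψ (t * f x * E (t * c x)) x` is a global complex-time flow of the field
`x ↦ f x • Θ x`. In particular, if `Θ` is complete and `Θ(f) ∈ Ker Θ`, then `f·Θ` is
complete. -/
theorem stmt_9 (n : ℕ) (Θ : (Fin n → ℂ) → (Fin n → ℂ))
    (ψ : ℂ → (Fin n → ℂ) → (Fin n → ℂ))
    (hψ0 : ∀ x, ψ 0 x = x)
    (hψ : ∀ (s : ℂ) (x : Fin n → ℂ), HasDerivAt (fun r => ψ r x) (Θ (ψ s x)) s)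
    (f c : (Fin n → ℂ) → ℂ)
    (hfc : ∀ (s : ℂ) (x : Fin n → ℂ), f (ψ s x) = f x + s * c x)
    (E : ℂ → ℂ) (hE : Differentiable ℂ E)
    (hEw : ∀ w : ℂ, w * E w = Complex.exp w - 1) (hE0 : E 0 = 1)
    (Φ : ℂ → (Fin n → ℂ) → (Fin n → ℂ))
    (hΦ : ∀ (t : ℂ) (x : Fin n → ℂ), Φ t x = ψ (t * f x * E (t * c x)) x) :
    (∀ x, Φ 0 x = x) ∧
    (∀ (t : ℂ) (x : Fin n → ℂ),
      HasDerivAt (fun s => Φ s x) ((fun y => f y • Θ y) (Φ t x)) t) :=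
  stmt_9_general n Θ ψ hψ0 hψ f c hfc E hEw hE0 Φ hΦ
end

section
/- Let f : ℂ^n → ℂ and ν : ℂ^n → ℂ^n be analytic, and suppose m : ℂ^n → ℂ is analytic with Dm_x(ν(x)) = 0 for all x ∈ ℂ^n (m lies in the kernel of ν). Then for every integer j ≥ 0, the function N : ℂ × ℂ × ℂ^n → ℂ, N(u,v,x) = m(x)·v^j, lies in the kernel of the lifted field ν_u; that is, DN_{(u,v,x)}(ν_u(u,v,x)) = 0 for all (u,v,x) ∈ ℂ^{2+n}. Symmetrically, if Dm_x(μ(x)) = 0 for all x, then for every i ≥ 0 the function M(u,v,x) = m(x)·u^i satisfies DM_{(u,v,x)}(μ_v(u,v,x)) = 0 for all (u,v,x), where μ_v(u,v,x) = (0, Df_x(μ(x)), u·μ(x)). -/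
/-! The lifted field `ν_u` has zero `v`-component and `x`-component `v • ν x`, so along it the
factor `v ^ j` is constant and `m₁` has derivative `v • Dm₁_x (ν x) = 0`; the product rule
finishes. The same holds for `μ_v`, with the roles of `u` and `v` exchanged. -/

section

variable {𝕜 E F G : Type*} [NontriviallyNormedField 𝕜] [NormedAddCommGroup E] [NormedSpace 𝕜 E]
  [NormedAddCommGroup F] [NormedSpace 𝕜 F] [NormedAddCommGroup G] [NormedSpace 𝕜 G]

theorem fderiv_comp_clm_apply {m : F → G} (L : E →L[𝕜] F) {p : E}
    (hm : DifferentiableAt 𝕜 m (L p)) (w : E) :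
    fderiv 𝕜 (fun q => m (L q)) p w = fderiv 𝕜 m (L p) (L w) := by
  rw [fderiv_fun_comp p hm L.differentiableAt, L.fderiv]
  rfl

theorem fderiv_clm_pow_apply_eq_zero (ℓ : E →L[𝕜] 𝕜) (j : ℕ) (p : E) {w : E} (hw : ℓ w = 0) :
    fderiv 𝕜 (fun q => ℓ q ^ j) p w = 0 := by
  rw [fderiv_fun_pow j ℓ.differentiableAt, ℓ.fderiv]
  simp [hw]

theorem fderiv_mul_apply_eq_zero {g h : E → 𝕜} {p w : E} (hg : DifferentiableAt 𝕜 g p)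
    (hh : DifferentiableAt 𝕜 h p) (hgw : fderiv 𝕜 g p w = 0) (hhw : fderiv 𝕜 h p w = 0) :
    fderiv 𝕜 (fun q => g q * h q) p w = 0 := by
  rw [fderiv_fun_mul hg hh]
  simp [hgw, hhw]

theorem fderiv_comp_clm_mul_pow_apply_eq_zero {m : F → 𝕜} (L : E →L[𝕜] F) (ℓ : E →L[𝕜] 𝕜)
    (j : ℕ) {p w : E} (hm : DifferentiableAt 𝕜 m (L p))
    (hLw : fderiv 𝕜 m (L p) (L w) = 0) (hℓw : ℓ w = 0) :
    fderiv 𝕜 (fun q => m (L q) * ℓ q ^ j) p w = 0 :=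
  fderiv_mul_apply_eq_zero (hm.comp p L.differentiableAt)
    (ℓ.differentiableAt.pow j) ((fderiv_comp_clm_apply L hm w).trans hLw)
    (fderiv_clm_pow_apply_eq_zero ℓ j p hℓw)

theorem fderiv_apply_smul_eq_zero {m : F → G} {x v : F} (hv : fderiv 𝕜 m x v = 0) (c : 𝕜) :
    fderiv 𝕜 m x (c • v) = 0 := by
  rw [map_smul, hv, smul_zero]

end

theorem stmt_12_general (n : ℕ) (f : (Fin n → ℂ) → ℂ)
    (ν μ : (Fin n → ℂ) → (Fin n → ℂ))
    (m₁ m₂ : (Fin n → ℂ) → ℂ) (hm₁ : Differentiable ℂ m₁) (hm₂ : Differentiable ℂ m₂)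
    (hker₁ : ∀ x : Fin n → ℂ, fderiv ℂ m₁ x (ν x) = 0)
    (hker₂ : ∀ x : Fin n → ℂ, fderiv ℂ m₂ x (μ x) = 0) :
    (∀ (j : ℕ) (u v : ℂ) (x : Fin n → ℂ),
      fderiv ℂ (fun p : ℂ × ℂ × (Fin n → ℂ) => m₁ p.2.2 * p.2.1 ^ j) (u, v, x)
        (fderiv ℂ f x (ν x), 0, v • ν x) = 0) ∧
    (∀ (i : ℕ) (u v : ℂ) (x : Fin n → ℂ),
      fderiv ℂ (fun p : ℂ × ℂ × (Fin n → ℂ) => m₂ p.2.2 * p.1 ^ i) (u, v, x)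
        (0, fderiv ℂ f x (μ x), u • μ x) = 0) := by
  let X : ℂ × ℂ × (Fin n → ℂ) →L[ℂ] Fin n → ℂ := .comp (.snd ℂ ℂ _) (.snd ℂ ℂ _)
  refine ⟨fun j u v x => ?_, fun i u v x => ?_⟩
  · exact fderiv_comp_clm_mul_pow_apply_eq_zero X (.comp (.fst ℂ ℂ _) (.snd ℂ ℂ _)) j
      (hm₁ x) (fderiv_apply_smul_eq_zero (hker₁ x) v) rfl
  · exact fderiv_comp_clm_mul_pow_apply_eq_zero X (.fst ℂ ℂ _) i
      (hm₂ x) (fderiv_apply_smul_eq_zero (hker₂ x) u) rfl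

/-- if `m₁` lies in the kernel of `ν` (i.e. `Dm₁_x (ν x) = 0` for all `x`),
then for every `j ≥ 0` the function `N (u,v,x) = m₁ x * v^j` lies in the kernel of the
lifted field `ν_u (u,v,x) = (Df_x(ν x), 0, v • ν x)`. Symmetrically, if `m₂` lies in the
kernel of `μ`, then for every `i ≥ 0` the function `M (u,v,x) = m₂ x * u^i` lies in the
kernel of `μ_v (u,v,x) = (0, Df_x(μ x), u • μ x)`. -/
theorem stmt_12 (n : ℕ) (f : (Fin n → ℂ) → ℂ) (hf : Differentiable ℂ f)
    (ν μ : (Fin n → ℂ) → (Fin n → ℂ)) (hν : Differentiable ℂ ν) (hμ : Differentiable ℂ μ)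
    (m₁ m₂ : (Fin n → ℂ) → ℂ) (hm₁ : Differentiable ℂ m₁) (hm₂ : Differentiable ℂ m₂)
    (hker₁ : ∀ x : Fin n → ℂ, fderiv ℂ m₁ x (ν x) = 0)
    (hker₂ : ∀ x : Fin n → ℂ, fderiv ℂ m₂ x (μ x) = 0) :
    (∀ (j : ℕ) (u v : ℂ) (x : Fin n → ℂ),
      fderiv ℂ (fun p : ℂ × ℂ × (Fin n → ℂ) => m₁ p.2.2 * p.2.1 ^ j) (u, v, x)
        (fderiv ℂ f x (ν x), 0, v • ν x) = 0) ∧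
    (∀ (i : ℕ) (u v : ℂ) (x : Fin n → ℂ),
      fderiv ℂ (fun p : ℂ × ℂ × (Fin n → ℂ) => m₂ p.2.2 * p.1 ^ i) (u, v, x)
        (0, fderiv ℂ f x (μ x), u • μ x) = 0) :=
  stmt_12_general n f ν μ m₁ m₂ hm₁ hm₂ hker₁ hker₂
end
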